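/- arXiv:2112.11320 — 2 statements merged into one kernel-verified Lean document; each statement's English description precedes it below -/
import Mathlib

section
/- There is a unique minimax-loss bid vector b^PAB in the multi-unit pay-as-bid auction; it satisfies b^PAB_M = v_M/(M+1), and for every k ∈ {1,…,M−1} it satisfies the implicit equation k·(b^PAB_k − b^PAB_{k+1}) = (v_k − b^PAB_k) + Σ_{j=k+1}^M [ (v_j − b^PAB_k)_+ − (v_j − b^PAB_{k+1})_+ ]. -/
noncomputable section

/-- Positive part `(x)₊ = max(x,0)`. -/
def pos (x : ℝ) : ℝ := max x 0

/-- A bid vector for `M` units: weakly decreasing on `{1,…,M}` and nonnegative at `M`. -/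
def IsBid (M : ℕ) (b : ℕ → ℝ) : Prop :=
  (∀ k, 1 ≤ k → k < M → b (k + 1) ≤ b k) ∧ 0 ≤ b M

/-- A value vector for `M` units: weakly decreasing on `{1,…,M}` and nonnegative at `M`. -/
def IsVal (M : ℕ) (v : ℕ → ℝ) : Prop :=
  (∀ k, 1 ≤ k → k < M → v (k + 1) ≤ v k) ∧ 0 ≤ v M

/-- Extension of the bid vector by the convention `b_{M+1} = 0`. -/
def bext (M : ℕ) (b : ℕ → ℝ) (k : ℕ) : ℝ := if k ≤ M then b k else 0

/-- Conditional regret at quantity `k ∈ {0,…,M}` in the multi-unit pay-as-bid auction: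
`R_k(b) = Σ_{j=1}^k (b_j − b_{k+1}) + Σ_{j=k+1}^M (v_j − b_{k+1})₊`. -/
def Rpab (M : ℕ) (v b : ℕ → ℝ) (k : ℕ) : ℝ :=
  (∑ j ∈ Finset.Icc 1 k, (b j - bext M b (k + 1)))
    + ∑ j ∈ Finset.Icc (k + 1) M, pos (v j - bext M b (k + 1))

/-- Maximum loss in the multi-unit pay-as-bid auction: `L^PAB(b) = max_{0 ≤ k ≤ M} R_k(b)`. -/
def Lpab (M : ℕ) (v b : ℕ → ℝ) : ℝ :=
  (Finset.Icc 0 M).sup' (Finset.nonempty_Icc.mpr (Nat.zero_le M)) (Rpab M v b)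

/-- A minimax-loss bid in the multi-unit pay-as-bid auction. -/
def IsMinimaxPAB (M : ℕ) (v b : ℕ → ℝ) : Prop :=
  IsBid M b ∧ ∀ b', IsBid M b' → Lpab M v b ≤ Lpab M v b'

namespace PABaux

lemma pos_nonneg' (x : ℝ) : 0 ≤ pos x := le_max_right _ _
lemma pos_le' (x : ℝ) : x ≤ pos x := le_max_left _ _
lemma pos_of_nonneg' {x : ℝ} (h : 0 ≤ x) : pos x = x := max_eq_left h
lemma pos_of_nonpos' {x : ℝ} (h : x ≤ 0) : pos x = 0 := max_eq_right h
lemma pos_anti {a x y : ℝ} (h : x ≤ y) : pos (a - y) ≤ pos (a - x) :=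
  max_le_max (by linarith) le_rfl

/-- the slack function whose root defines `b k` from `t = b (k+1)`. -/
def g (M : ℕ) (v : ℕ → ℝ) (k : ℕ) (t x : ℝ) : ℝ :=
  (k : ℝ) * (x - t) - (v k - x)
    - ∑ j ∈ Finset.Icc (k + 1) M, (pos (v j - x) - pos (v j - t))

lemma g_cont (M : ℕ) (v : ℕ → ℝ) (k : ℕ) (t : ℝ) : Continuous (g M v k t) := by
  unfold g pos
  apply Continuous.sub
  apply Continuous.sub
  · exact continuous_const.mul (continuous_id.sub continuous_const)
  · exact continuous_const.sub continuous_id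
  · apply continuous_finset_sum
    intro j _
    exact ((continuous_const.sub continuous_id).max continuous_const).sub continuous_const

lemma g_strictMono (M : ℕ) (v : ℕ → ℝ) (k : ℕ) (t : ℝ) : StrictMono (g M v k t) := by
  intro x y hxy
  unfold g
  have hsum : ∑ j ∈ Finset.Icc (k + 1) M, (pos (v j - y) - pos (v j - t))
      ≤ ∑ j ∈ Finset.Icc (k + 1) M, (pos (v j - x) - pos (v j - t)) := by
    apply Finset.sum_le_sum
    intro j _
    have := pos_anti (a := v j) (le_of_lt hxy)
    linarith
  have hk : (0:ℝ) ≤ (k:ℝ) := Nat.cast_nonneg k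
  nlinarith

lemma exists_root (M : ℕ) (v : ℕ → ℝ) (k : ℕ) (t : ℝ) (h1 : t ≤ v k)
    (h2 : ∀ j ∈ Finset.Icc (k + 1) M, v j ≤ v k) :
    ∃ x, x ∈ Set.Icc t (v k) ∧ g M v k t x = 0 := by
  have hgt : g M v k t t ≤ 0 := by
    unfold g; simp; linarith
  have hgv : 0 ≤ g M v k t (v k) := by
    unfold g
    have hs : ∑ j ∈ Finset.Icc (k + 1) M, (pos (v j - v k) - pos (v j - t)) ≤ 0 := by
      apply Finset.sum_nonpos
      intro j hj
      have h0 : pos (v j - v k) = 0 := pos_of_nonpos' (by linarith [h2 j hj])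
      have := pos_nonneg' (v j - t)
      linarith
    have hk : (0:ℝ) ≤ (k:ℝ) := Nat.cast_nonneg k
    nlinarith
  have hiv := intermediate_value_Icc h1 (g_cont M v k t).continuousOn
  have h0 : (0:ℝ) ∈ Set.Icc (g M v k t t) (g M v k t (v k)) := ⟨hgt, hgv⟩
  obtain ⟨x, hx, hgx⟩ := hiv h0
  exact ⟨x, hx, hgx⟩

open Classical in
def next (M : ℕ) (v : ℕ → ℝ) (k : ℕ) (t : ℝ) : ℝ :=
  if h : ∃ x, x ∈ Set.Icc t (v k) ∧ g M v k t x = 0 then h.choose else t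

lemma next_spec (M : ℕ) (v : ℕ → ℝ) (k : ℕ) (t : ℝ) (h1 : t ≤ v k)
    (h2 : ∀ j ∈ Finset.Icc (k + 1) M, v j ≤ v k) :
    next M v k t ∈ Set.Icc t (v k) ∧ g M v k t (next M v k t) = 0 := by
  have h := exists_root M v k t h1 h2
  rw [next]
  split_ifs
  exact h.choose_spec

def dseq (M : ℕ) (v : ℕ → ℝ) : ℕ → ℝ
  | 0 => v M / (M + 1)
  | n + 1 => next M v (M - (n + 1)) (dseq M v n)

def bopt (M : ℕ) (v : ℕ → ℝ) (k : ℕ) : ℝ := dseq M v (M - k)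

lemma val_anti (M : ℕ) (v : ℕ → ℝ) (hv : IsVal M v) :
    ∀ k j, 1 ≤ k → k ≤ j → j ≤ M → v j ≤ v k := by
  intro k j hk hkj hjM
  induction j with
  | zero => omega
  | succ n ih =>
    rcases Nat.eq_or_lt_of_le hkj with he | hl
    · rw [← he]
    · have h1 : v (n+1) ≤ v n := hv.1 n (by omega) (by omega)
      have h2 : v n ≤ v k := ih (by omega) (by omega)
      linarith

lemma bopt_M (M : ℕ) (v : ℕ → ℝ) : bopt M v M = v M / (M + 1) := by
  simp [bopt, dseq]

lemma chain (M : ℕ) (v : ℕ → ℝ) (hM : 1 ≤ M) (hv : IsVal M v) :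
    ∀ n, n < M → (bopt M v (M - n) ≤ v (M - n) ∧
      (1 ≤ n → bopt M v (M - n + 1) ≤ bopt M v (M - n) ∧
        g M v (M - n) (bopt M v (M - n + 1)) (bopt M v (M - n)) = 0)) := by
  intro n
  induction n with
  | zero =>
    intro _
    constructor
    · rw [Nat.sub_zero, bopt_M]
      have h2 : (1:ℝ) ≤ (M:ℝ) + 1 := by
        have : (0:ℝ) ≤ (M:ℝ) := Nat.cast_nonneg M
        linarith
      exact div_le_self hv.2 h2
    · intro h; omega
  | succ n ih =>
    intro hn1
    have hnM : n < M := by omega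
    obtain ⟨ihle, _⟩ := ih hnM
    set k := M - (n + 1) with hk
    have hk1 : 1 ≤ k := by omega
    have hkM : k < M := by omega
    have hkk : M - n = k + 1 := by omega
    have ht : bopt M v (k + 1) ≤ v (k + 1) := by rw [← hkk]; exact ihle
    have hvk : v (k + 1) ≤ v k := hv.1 k hk1 hkM
    have h2 : ∀ j ∈ Finset.Icc (k + 1) M, v j ≤ v k := by
      intro j hj
      simp only [Finset.mem_Icc] at hj
      exact val_anti M v hv k j hk1 (by omega) hj.2
    have hroot := next_spec M v k (bopt M v (k + 1)) (le_trans ht hvk) h2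
    have hbk : bopt M v k = next M v k (bopt M v (k + 1)) := by
      have e1 : M - k = n + 1 := by omega
      have e2 : M - (k + 1) = n := by omega
      rw [bopt, e1, dseq, ← hk, bopt, e2]
    constructor
    · rw [hbk]; exact hroot.1.2
    · intro _
      constructor
      · rw [hbk]; exact hroot.1.1
      · rw [hbk]; exact hroot.2


lemma bopt_le_v (M : ℕ) (v : ℕ → ℝ) (hM : 1 ≤ M) (hv : IsVal M v)
    {k : ℕ} (hk1 : 1 ≤ k) (hkM : k ≤ M) : bopt M v k ≤ v k := by
  have h := (chain M v hM hv (M - k) (by omega)).1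
  rwa [show M - (M - k) = k by omega] at h

lemma bopt_mono (M : ℕ) (v : ℕ → ℝ) (hM : 1 ≤ M) (hv : IsVal M v)
    {k : ℕ} (hk1 : 1 ≤ k) (hkM : k < M) : bopt M v (k + 1) ≤ bopt M v k := by
  have h := ((chain M v hM hv (M - k) (by omega)).2 (by omega)).1
  rwa [show M - (M - k) = k by omega] at h

lemma bopt_geq (M : ℕ) (v : ℕ → ℝ) (hM : 1 ≤ M) (hv : IsVal M v)
    {k : ℕ} (hk1 : 1 ≤ k) (hkM : k < M) :
    g M v k (bopt M v (k + 1)) (bopt M v k) = 0 := by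
  have h := ((chain M v hM hv (M - k) (by omega)).2 (by omega)).2
  rwa [show M - (M - k) = k by omega] at h

lemma Icc_split_top {k : ℕ} (hk : 1 ≤ k) (f : ℕ → ℝ) :
    ∑ j ∈ Finset.Icc 1 k, f j = (∑ j ∈ Finset.Icc 1 (k - 1), f j) + f k := by
  obtain ⟨m, rfl⟩ : ∃ m, k = m + 1 := ⟨k - 1, by omega⟩
  rw [Finset.sum_Icc_succ_top (by omega)]
  simp

lemma Icc_split_bot {k M : ℕ} (hk : k ≤ M) (f : ℕ → ℝ) :
    ∑ j ∈ Finset.Icc k M, f j = f k + ∑ j ∈ Finset.Icc (k + 1) M, f j := by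
  rw [show Finset.Icc k M = insert k (Finset.Icc (k + 1) M) by
    ext x; simp only [Finset.mem_insert, Finset.mem_Icc]; omega]
  rw [Finset.sum_insert (by simp)]

lemma Rpab_eval (M : ℕ) (v b : ℕ → ℝ) (k : ℕ) :
    Rpab M v b k = (∑ j ∈ Finset.Icc 1 k, b j) - (k : ℝ) * bext M b (k + 1)
      + ∑ j ∈ Finset.Icc (k + 1) M, pos (v j - bext M b (k + 1)) := by
  unfold Rpab
  rw [Finset.sum_sub_distrib, Finset.sum_const, Nat.card_Icc]
  simp

lemma RM_eval (M : ℕ) (v b : ℕ → ℝ) : Rpab M v b M = ∑ j ∈ Finset.Icc 1 M, b j := by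
  unfold Rpab
  rw [show bext M b (M + 1) = 0 from if_neg (by omega)]
  rw [show Finset.Icc (M + 1) M = ∅ from Finset.Icc_eq_empty (by omega)]
  simp

lemma Rpab_diff (M : ℕ) (v b : ℕ → ℝ) {k : ℕ} (hk1 : 1 ≤ k) (hkM : k ≤ M) :
    Rpab M v b (k - 1) - Rpab M v b k
      = -(k : ℝ) * (b k - bext M b (k + 1)) + pos (v k - b k)
        + ∑ j ∈ Finset.Icc (k + 1) M, (pos (v j - b k) - pos (v j - bext M b (k + 1))) := by
  have h1 : (k - 1) + 1 = k := by omega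
  rw [Rpab_eval M v b (k - 1), Rpab_eval M v b k, h1]
  have hb : bext M b k = b k := if_pos hkM
  rw [hb, Icc_split_top hk1 b, Icc_split_bot hkM (fun j => pos (v j - b k)),
      Finset.sum_sub_distrib]
  rw [Nat.cast_sub hk1]
  push_cast
  ring

lemma diff_zero (M : ℕ) (v : ℕ → ℝ) (hM : 1 ≤ M) (hv : IsVal M v)
    {k : ℕ} (hk1 : 1 ≤ k) (hkM : k ≤ M) :
    Rpab M v (bopt M v) (k - 1) = Rpab M v (bopt M v) k := by
  have hd := Rpab_diff M v (bopt M v) hk1 hkM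
  rcases Nat.eq_or_lt_of_le hkM with heq | hlt
  · rw [heq] at hd ⊢
    rw [show bext M (bopt M v) (M + 1) = 0 from if_neg (by omega)] at hd
    rw [show Finset.Icc (M + 1) M = ∅ from Finset.Icc_eq_empty (by omega)] at hd
    have hbM : bopt M v M = v M / (M + 1) := bopt_M M v
    have hle : bopt M v M ≤ v M := bopt_le_v M v hM hv hM le_rfl
    rw [pos_of_nonneg' (by linarith)] at hd
    simp only [Finset.sum_empty] at hd
    have hM1 : (M : ℝ) + 1 ≠ 0 := by positivity
    have : (M : ℝ) * (v M / (M + 1)) + (v M / (M + 1)) = v M := by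
      field_simp
    rw [hbM] at hd
    linarith
  · have hbe : bext M (bopt M v) (k + 1) = bopt M v (k + 1) := if_pos (by omega)
    rw [hbe] at hd
    have hle : bopt M v k ≤ v k := bopt_le_v M v hM hv hk1 hkM
    rw [pos_of_nonneg' (by linarith)] at hd
    have hg := bopt_geq M v hM hv hk1 hlt
    unfold g at hg
    linarith

lemma Rpab_eq_RM (M : ℕ) (v : ℕ → ℝ) (hM : 1 ≤ M) (hv : IsVal M v) :
    ∀ k, k ≤ M → Rpab M v (bopt M v) k = Rpab M v (bopt M v) M := by
  have H : ∀ n, ∀ k, k + n = M → Rpab M v (bopt M v) k = Rpab M v (bopt M v) M := by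
    intro n
    induction n with
    | zero => intro k hk; rw [show k = M by omega]
    | succ n ih =>
      intro k hk
      have h1 : Rpab M v (bopt M v) k = Rpab M v (bopt M v) (k + 1) := by
        have := diff_zero M v hM hv (k := k + 1) (by omega) (by omega)
        rwa [show (k + 1) - 1 = k by omega] at this
      rw [h1]
      exact ih (k + 1) (by omega)
  intro k hk
  exact H (M - k) k (by omega)

lemma Lpab_bopt (M : ℕ) (v : ℕ → ℝ) (hM : 1 ≤ M) (hv : IsVal M v) :
    Lpab M v (bopt M v) = Rpab M v (bopt M v) M := by
  apply le_antisymm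
  · apply Finset.sup'_le
    intro k hk
    simp only [Finset.mem_Icc] at hk
    rw [Rpab_eq_RM M v hM hv k hk.2]
  · exact Finset.le_sup' _ (by simp)


lemma key (M : ℕ) (v : ℕ → ℝ) (hM : 1 ≤ M) (hv : IsVal M v)
    (b' : ℕ → ℝ) (hL : Lpab M v b' ≤ Rpab M v (bopt M v) M) :
    ∀ k, 1 ≤ k → k ≤ M → bopt M v k ≤ b' k := by
  intro k
  induction k using Nat.strong_induction_on with
  | _ k ih =>
    intro hk1 hkM
    by_contra hcon
    push_neg at hcon
    have hRb' : Rpab M v b' (k - 1) ≤ Rpab M v (bopt M v) M :=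
      le_trans (Finset.le_sup' (Rpab M v b') (by simp; omega)) hL
    have hc : Rpab M v (bopt M v) (k - 1) = Rpab M v (bopt M v) M :=
      Rpab_eq_RM M v hM hv (k - 1) (by omega)
    have e1 := Rpab_eval M v b' (k - 1)
    have e2 := Rpab_eval M v (bopt M v) (k - 1)
    rw [show (k - 1) + 1 = k from by omega] at e1 e2
    rw [show bext M b' k = b' k from if_pos hkM] at e1
    rw [show bext M (bopt M v) k = bopt M v k from if_pos hkM] at e2
    rw [Nat.cast_sub hk1] at e1 e2
    have hsum : ∑ j ∈ Finset.Icc 1 (k - 1), bopt M v j ≤ ∑ j ∈ Finset.Icc 1 (k - 1), b' j := by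
      apply Finset.sum_le_sum
      intro j hj
      simp only [Finset.mem_Icc] at hj
      exact ih j (by omega) hj.1 (by omega)
    have hpsum : ∑ j ∈ Finset.Icc k M, pos (v j - bopt M v k)
        ≤ ∑ j ∈ Finset.Icc k M, pos (v j - b' k) := by
      apply Finset.sum_le_sum
      intro j _
      exact pos_anti (le_of_lt hcon)
    rcases Nat.lt_or_ge 1 k with hk2 | hk1'
    · have hck : (1:ℝ) < (k:ℝ) := by exact_mod_cast hk2
      push_cast at e1 e2
      have hprod : ((k:ℝ) - 1) * b' k < ((k:ℝ) - 1) * bopt M v k :=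
        (mul_lt_mul_iff_right₀ (by linarith)).mpr hcon
      linarith [hRb', hc, e1, e2, hsum, hpsum, hprod]
    · have hke : k = 1 := by omega
      subst hke
      rw [Icc_split_bot hM (fun j => pos (v j - b' 1))] at e1
      rw [Icc_split_bot hM (fun j => pos (v j - bopt M v 1))] at e2
      have hb1 : bopt M v 1 ≤ v 1 := bopt_le_v M v hM hv le_rfl hM
      have hp1 : pos (v 1 - bopt M v 1) = v 1 - bopt M v 1 := pos_of_nonneg' (by linarith)
      have hp2 : v 1 - b' 1 ≤ pos (v 1 - b' 1) := pos_le' _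
      have hrest : ∑ j ∈ Finset.Icc 2 M, pos (v j - bopt M v 1)
          ≤ ∑ j ∈ Finset.Icc 2 M, pos (v j - b' 1) := by
        apply Finset.sum_le_sum
        intro j _
        exact pos_anti (le_of_lt hcon)
      simp only [Nat.cast_one] at e1 e2
      nlinarith [hRb', hc, e1, e2, hsum]

lemma eq_on (M : ℕ) (v : ℕ → ℝ) (hM : 1 ≤ M) (hv : IsVal M v)
    (b' : ℕ → ℝ) (hL : Lpab M v b' ≤ Rpab M v (bopt M v) M) :
    ∀ k ∈ Finset.Icc 1 M, b' k = bopt M v k := by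
  have hge := key M v hM hv b' hL
  have hRM : Rpab M v b' M ≤ Rpab M v (bopt M v) M :=
    le_trans (Finset.le_sup' (Rpab M v b') (by simp)) hL
  rw [RM_eval, RM_eval] at hRM
  have hle : ∀ j ∈ Finset.Icc 1 M, bopt M v j ≤ b' j := by
    intro j hj
    simp only [Finset.mem_Icc] at hj
    exact hge j hj.1 hj.2
  have heq := (Finset.sum_eq_sum_iff_of_le hle).mp
    (le_antisymm (Finset.sum_le_sum hle) hRM)
  intro k hk
  exact (heq k hk).symm

lemma Rpab_congr (M : ℕ) (v b₁ b₂ : ℕ → ℝ) (k : ℕ) (hk : k ≤ M)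
    (h : ∀ j ∈ Finset.Icc 1 M, b₁ j = b₂ j) :
    Rpab M v b₁ k = Rpab M v b₂ k := by
  have hbe : bext M b₁ (k + 1) = bext M b₂ (k + 1) := by
    unfold bext
    split_ifs with h'
    · exact h _ (by simp only [Finset.mem_Icc]; omega)
    · rfl
  unfold Rpab
  rw [hbe]
  congr 1
  apply Finset.sum_congr rfl
  intro j hj
  simp only [Finset.mem_Icc] at hj
  rw [h j (by simp only [Finset.mem_Icc]; exact ⟨hj.1, by omega⟩)]

lemma Lpab_congr (M : ℕ) (v b₁ b₂ : ℕ → ℝ)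
    (h : ∀ j ∈ Finset.Icc 1 M, b₁ j = b₂ j) :
    Lpab M v b₁ = Lpab M v b₂ := by
  unfold Lpab
  apply le_antisymm
  · apply Finset.sup'_le
    intro k hk
    simp only [Finset.mem_Icc] at hk
    rw [Rpab_congr M v b₁ b₂ k hk.2 h]
    exact Finset.le_sup' _ (by simp only [Finset.mem_Icc]; omega)
  · apply Finset.sup'_le
    intro k hk
    simp only [Finset.mem_Icc] at hk
    rw [← Rpab_congr M v b₁ b₂ k hk.2 h]
    exact Finset.le_sup' _ (by simp only [Finset.mem_Icc]; omega)

lemma isBid_bopt (M : ℕ) (v : ℕ → ℝ) (hM : 1 ≤ M) (hv : IsVal M v) :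
    IsBid M (bopt M v) := by
  constructor
  · intro k hk1 hkM
    exact bopt_mono M v hM hv hk1 hkM
  · rw [bopt_M]
    have h0 : (0:ℝ) ≤ v M := hv.2
    positivity

end PABaux

/-- there is a unique minimax-loss bid vector `b^PAB` in the multi-unit
pay-as-bid auction; it satisfies `b_M = v_M/(M+1)` and, for `1 ≤ k < M`, the implicit
equation `k (b_k − b_{k+1}) = (v_k − b_k) + Σ_{j=k+1}^M [(v_j − b_k)₊ − (v_j − b_{k+1})₊]`. -/
theorem minimax_pab_unique_and_implicit_equation
    (M : ℕ) (hM : 1 ≤ M) (v : ℕ → ℝ) (hv : IsVal M v) :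
    ∃ b : ℕ → ℝ, IsMinimaxPAB M v b ∧
      (∀ b', IsMinimaxPAB M v b' → ∀ k ∈ Finset.Icc 1 M, b' k = b k) ∧
      b M = v M / (M + 1) ∧
      (∀ k, 1 ≤ k → k < M →
        (k : ℝ) * (b k - b (k + 1)) =
          (v k - b k) +
            ∑ j ∈ Finset.Icc (k + 1) M, (pos (v j - b k) - pos (v j - b (k + 1)))) := by
  refine ⟨PABaux.bopt M v, ⟨PABaux.isBid_bopt M v hM hv, ?_⟩, ?_, PABaux.bopt_M M v, ?_⟩
  · -- minimality
    intro b' hb'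
    by_contra hlt
    push_neg at hlt
    have hLb : Lpab M v (PABaux.bopt M v) = Rpab M v (PABaux.bopt M v) M :=
      PABaux.Lpab_bopt M v hM hv
    have hL' : Lpab M v b' ≤ Rpab M v (PABaux.bopt M v) M := by
      rw [← hLb]; exact le_of_lt hlt
    have hge := PABaux.key M v hM hv b' hL'
    have hRM : Rpab M v (PABaux.bopt M v) M ≤ Rpab M v b' M := by
      rw [PABaux.RM_eval, PABaux.RM_eval]
      apply Finset.sum_le_sum
      intro j hj
      simp only [Finset.mem_Icc] at hj
      exact hge j hj.1 hj.2
    have hle : Rpab M v b' M ≤ Lpab M v b' := Finset.le_sup' _ (by simp)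
    linarith
  · -- uniqueness
    intro b' hb' k hk
    have hL' : Lpab M v b' ≤ Rpab M v (PABaux.bopt M v) M := by
      rw [← PABaux.Lpab_bopt M v hM hv]
      exact hb'.2 (PABaux.bopt M v) (PABaux.isBid_bopt M v hM hv)
    exact PABaux.eq_on M v hM hv b' hL' k hk
  · -- implicit equation
    intro k hk1 hkM
    have hg := PABaux.bopt_geq M v hM hv hk1 hkM
    unfold PABaux.g at hg
    linarith

end
end

section
/- Suppose M ≥ 2 and v_1 ≥ 2·v_M > 0. Then there is no unique minimax-loss bid in the multi-unit uniform-price auction: there exist two distinct bid vectors b ≠ b' that both minimize L^LAB over all bid vectors. -/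
noncomputable section

/-- Overbidding regret at quantity `k ∈ {1,…,M}` in the multi-unit uniform-price auction:
`O_k(b) = k·b_k`. -/
def Olab (b : ℕ → ℝ) (k : ℕ) : ℝ := (k : ℝ) * b k

/-- Underbidding regret at quantity `k − 1` in the multi-unit uniform-price auction:
`U_{k−1}(b) = Σ_{j=k}^M (v_j − b_k)₊`. -/
def Ulab (M : ℕ) (v b : ℕ → ℝ) (k : ℕ) : ℝ :=
  ∑ j ∈ Finset.Icc k M, pos (v j - b k)

/-- Maximum loss in the multi-unit uniform-price auction:
`L^LAB(b) = max_{1 ≤ k ≤ M} max(O_k(b), U_{k−1}(b))`. -/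
def Llab (M : ℕ) (hM : 1 ≤ M) (v b : ℕ → ℝ) : ℝ :=
  (Finset.Icc 1 M).sup' (Finset.nonempty_Icc.mpr hM)
    (fun k => max (Olab b k) (Ulab M v b k))

/-- A cross-conditional regret minimizing bid: `k·b_k = Σ_{j=k}^M (v_j − b_k)₊` for all
`k ∈ {1,…,M}`. -/
def IsCrossCond (M : ℕ) (v b : ℕ → ℝ) : Prop :=
  ∀ k ∈ Finset.Icc 1 M, (k : ℝ) * b k = ∑ j ∈ Finset.Icc k M, pos (v j - b k)

/-- A minimax-loss bid in the multi-unit uniform-price auction. -/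
def IsMinimaxLAB (M : ℕ) (hM : 1 ≤ M) (v b : ℕ → ℝ) : Prop :=
  IsBid M b ∧ ∀ b', IsBid M b' → Llab M hM v b ≤ Llab M hM v b'

lemma pos_nonneg' (x : ℝ) : 0 ≤ pos x := le_max_right _ _

lemma pos_mono' {x y : ℝ} (h : x ≤ y) : pos x ≤ pos y := max_le_max h le_rfl

lemma val_le_one (M : ℕ) (v : ℕ → ℝ) (hv : IsVal M v) :
    ∀ j, 1 ≤ j → j ≤ M → v j ≤ v 1 := by
  intro j
  induction j with
  | zero => intro h; exact absurd h (by norm_num)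
  | succ n ih =>
    intro _ hM'
    rcases Nat.eq_zero_or_pos n with h0 | h1
    · subst h0; exact le_rfl
    · exact le_trans (hv.1 n h1 (by omega)) (ih h1 (by omega))

lemma exists_fixed (M : ℕ) (v : ℕ → ℝ) (hv : IsVal M v) (h1 : 0 ≤ v 1) :
    ∀ k ∈ Finset.Icc 1 M,
      ∃ t, 0 ≤ t ∧ t ≤ v 1 ∧ (k : ℝ) * t = ∑ j ∈ Finset.Icc k M, pos (v j - t) := by
  intro k hk
  obtain ⟨hk1, hkM⟩ := Finset.mem_Icc.mp hk
  set f : ℝ → ℝ := fun t => (k : ℝ) * t - ∑ j ∈ Finset.Icc k M, pos (v j - t) with hf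
  have hcont : Continuous f := by
    apply Continuous.sub (continuous_const.mul continuous_id)
    apply continuous_finset_sum
    intro j _
    exact (continuous_const.sub continuous_id).max continuous_const
  have hf0 : f 0 ≤ 0 := by
    simp only [hf, mul_zero, zero_sub, neg_nonpos]
    exact Finset.sum_nonneg fun j _ => pos_nonneg' _
  have hfv : 0 ≤ f (v 1) := by
    have hz : ∑ j ∈ Finset.Icc k M, pos (v j - v 1) = 0 := by
      apply Finset.sum_eq_zero
      intro j hj
      obtain ⟨hj1, hjM⟩ := Finset.mem_Icc.mp hj
      have : v j ≤ v 1 := val_le_one M v hv j (le_trans hk1 hj1) hjM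
      exact max_eq_right (by linarith)
    simp only [hf, hz, sub_zero]
    exact mul_nonneg (Nat.cast_nonneg k) h1
  have := intermediate_value_Icc h1 hcont.continuousOn
  obtain ⟨t, htmem, htval⟩ := this ⟨hf0, hfv⟩
  refine ⟨t, htmem.1, htmem.2, ?_⟩
  have : (k : ℝ) * t - ∑ j ∈ Finset.Icc k M, pos (v j - t) = 0 := htval
  linarith

/-- if `M ≥ 2` and `v_1 ≥ 2 v_M > 0`, the minimax-loss bid in the multi-unit
uniform-price auction is not unique: two distinct bid vectors both minimize `L^LAB`. -/
theorem no_unique_minimax_lab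
    (M : ℕ) (hM : 2 ≤ M) (v : ℕ → ℝ) (hv : IsVal M v)
    (hgap : 2 * v M ≤ v 1) (hpos : 0 < v M) :
    ∃ b b' : ℕ → ℝ,
      IsMinimaxLAB M (le_trans one_le_two hM) v b ∧
      IsMinimaxLAB M (le_trans one_le_two hM) v b' ∧
      ∃ k ∈ Finset.Icc 1 M, b k ≠ b' k := by
  have hM1 : 1 ≤ M := le_trans one_le_two hM
  have hv1 : 0 < v 1 := lt_of_lt_of_le (by linarith) hgap
  have hmem : ∀ k, 1 ≤ k → k ≤ M → k ∈ Finset.Icc 1 M := by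
    intro k h1 h2; exact Finset.mem_Icc.mpr ⟨h1, h2⟩
  choose! t ht using exists_fixed M v hv hv1.le
  -- Basic facts about t
  have ht0 : ∀ k ∈ Finset.Icc 1 M, 0 ≤ t k := fun k hk => (ht k hk).1
  have hfix : ∀ k ∈ Finset.Icc 1 M,
      (k : ℝ) * t k = ∑ j ∈ Finset.Icc k M, pos (v j - t k) := fun k hk => (ht k hk).2.2
  -- t is weakly decreasing on {1,…,M}
  have hmono : ∀ k, 1 ≤ k → k < M → t (k + 1) ≤ t k := by
    intro k hk1 hkM
    by_contra hlt
    push_neg at hlt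
    have e1 := hfix k (hmem k hk1 hkM.le)
    have e2 := hfix (k + 1) (hmem (k + 1) (by omega) (by omega))
    have htk0 : 0 ≤ t k := ht0 k (hmem k hk1 hkM.le)
    have hsum1 : ∑ j ∈ Finset.Icc (k + 1) M, pos (v j - t (k + 1))
        ≤ ∑ j ∈ Finset.Icc (k + 1) M, pos (v j - t k) :=
      Finset.sum_le_sum fun j _ => pos_mono' (by linarith)
    have hsum2 : ∑ j ∈ Finset.Icc (k + 1) M, pos (v j - t k)
        ≤ ∑ j ∈ Finset.Icc k M, pos (v j - t k) :=
      Finset.sum_le_sum_of_subset_of_nonneg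
        (Finset.Icc_subset_Icc_left (by omega)) (fun j _ _ => pos_nonneg' _)
    have h1 : ((k : ℝ) + 1) * t (k + 1) ≤ (k : ℝ) * t k := by
      push_cast at e2; linarith
    have h2 : (k : ℝ) * t k < ((k : ℝ) + 1) * t (k + 1) := by
      have hk1pos : (0 : ℝ) < (k : ℝ) + 1 := by positivity
      nlinarith
    linarith
  -- the cross-conditional bid b := t is a bid
  have hbid : IsBid M t :=
    ⟨fun k h1 h2 => hmono k h1 h2, ht0 M (hmem M hM1 le_rfl)⟩
  -- the minimax value lower bound: Llab t ≤ Llab bb for every bb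
  have hLB : ∀ bb : ℕ → ℝ, Llab M hM1 v t ≤ Llab M hM1 v bb := by
    intro bb
    apply Finset.sup'_le
    intro k hk
    have hfx := hfix k hk
    have hterm : max (Olab t k) (Ulab M v t k) = (k : ℝ) * t k := by
      unfold Olab Ulab; rw [← hfx]; exact max_self _
    rw [hterm]
    have hstep : (k : ℝ) * t k ≤ max (Olab bb k) (Ulab M v bb k) := by
      rcases le_total (t k) (bb k) with hle | hle
      · refine le_trans ?_ (le_max_left _ _)
        exact mul_le_mul_of_nonneg_left hle (Nat.cast_nonneg k)
      · refine le_trans ?_ (le_max_right _ _)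
        rw [hfx]
        exact Finset.sum_le_sum fun j _ => pos_mono' (by linarith)
    exact hstep.trans (Finset.le_sup' (fun k => max (Olab bb k) (Ulab M v bb k)) hk)
  -- t 1 is at least v 1 / 2, hence at least v M
  have ht1 : v M ≤ t 1 := by
    have hfx := hfix 1 (hmem 1 le_rfl hM1)
    have hone : (1 : ℕ) ∈ Finset.Icc 1 M := hmem 1 le_rfl hM1
    have hsingle : pos (v 1 - t 1) ≤ ∑ j ∈ Finset.Icc 1 M, pos (v j - t 1) :=
      Finset.single_le_sum (f := fun j => pos (v j - t 1))
        (fun j _ => pos_nonneg' _) hone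
    have hp : v 1 - t 1 ≤ pos (v 1 - t 1) := le_max_left _ _
    have : v 1 - t 1 ≤ t 1 := by
      push_cast at hfx; linarith
    linarith
  -- Llab t is at least t 1
  have hLlow : t 1 ≤ Llab M hM1 v t := by
    have h1mem : (1 : ℕ) ∈ Finset.Icc 1 M := hmem 1 le_rfl hM1
    have := Finset.le_sup' (fun k => max (Olab t k) (Ulab M v t k)) h1mem
    refine le_trans ?_ this
    refine le_trans ?_ (le_max_left _ _)
    unfold Olab; push_cast; linarith
  -- the modified bid b' : last coordinate set to 0
  set b' : ℕ → ℝ := Function.update t M 0 with hb'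
  have hb'M : b' M = 0 := Function.update_self M 0 t
  have hb'ne : ∀ k, k ≠ M → b' k = t k := fun k hk => Function.update_of_ne hk 0 t
  have hbid' : IsBid M b' := by
    constructor
    · intro k h1 h2
      rcases eq_or_ne (k + 1) M with he | he
      · rw [he, hb'M, hb'ne k (by omega)]
        exact ht0 k (hmem k h1 (by omega))
      · rw [hb'ne (k + 1) he, hb'ne k (by omega)]
        exact hmono k h1 h2
    · rw [hb'M]
  -- Llab b' ≤ Llab t
  have hUB : Llab M hM1 v b' ≤ Llab M hM1 v t := by
    apply Finset.sup'_le
    intro k hk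
    rcases eq_or_ne k M with he | he
    · rw [he]
      have hO : Olab b' M = 0 := by unfold Olab; rw [hb'M, mul_zero]
      have hU : Ulab M v b' M = v M := by
        unfold Ulab
        rw [hb'M, Finset.Icc_self, Finset.sum_singleton, sub_zero]
        exact max_eq_left hpos.le
      rw [hO, hU]
      have hvM : v M ≤ Llab M hM1 v t := le_trans ht1 hLlow
      have h0 : (0 : ℝ) ≤ Llab M hM1 v t := le_trans hpos.le hvM
      exact max_le h0 hvM
    · have hO : Olab b' k = Olab t k := by unfold Olab; rw [hb'ne k he]
      have hU : Ulab M v b' k = Ulab M v t k := by unfold Ulab; rw [hb'ne k he]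
      rw [hO, hU]
      exact Finset.le_sup' (fun k => max (Olab t k) (Ulab M v t k)) hk
  -- t M > 0
  have htM : 0 < t M := by
    have hMmem : M ∈ Finset.Icc 1 M := hmem M hM1 le_rfl
    have hfx := hfix M hMmem
    rw [Finset.Icc_self, Finset.sum_singleton] at hfx
    rcases lt_or_ge 0 (t M) with h | h
    · exact h
    · exfalso
      have htM0 : t M = 0 := le_antisymm h (ht0 M hMmem)
      rw [htM0, mul_zero, sub_zero] at hfx
      have : pos (v M) = v M := max_eq_left hpos.le
      linarith [hfx, this]
  refine ⟨t, b', ⟨hbid, fun bb hbb => hLB bb⟩,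
    ⟨hbid', fun bb hbb => le_trans hUB (hLB bb)⟩,
    ⟨M, hmem M hM1 le_rfl, ?_⟩⟩
  rw [hb'M]
  exact ne_of_gt htM

end
end
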